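/- Let H be a d-uniform properly-connected hypergraph with edge ideal I(H). Then β_{i−1, di}(I(H)) equals the number of sets of i pairwise (d+1)-disjoint edges of H. Consequently, if c is the maximal number of pairwise (d+1)-disjoint edges, then reg(I(H)) ≥ (d−1)c + 1. -/

import Mathlib

open Finset
open scoped Classical

noncomputable section

/-- A simple hypergraph: all edges have at least two vertices and no edge contains another. -/
structure SimpleHypergraph (V : Type*) where
  edges : Finset (Finset V)
  card_ge : ∀ e ∈ edges, 2 ≤ e.card
  antichain : ∀ e ∈ edges, ∀ f ∈ edges, e ⊆ f → e = f

variable {V : Type*} [DecidableEq V]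

/-- A chain `(E₀, x₁, E₁, …, xₙ, Eₙ)` in a hypergraph, recorded as the list of its edges;
the vertex conditions amount to `xₖ ∈ Eₖ₋₁ ∩ Eₖ`. -/
def IsHChain (H : SimpleHypergraph V) (l : List (Finset V)) : Prop :=
  l ≠ [] ∧ l.Nodup ∧ (∀ e ∈ l, e ∈ H.edges) ∧
  ∃ xs : List V, xs.Nodup ∧ xs.length + 1 = l.length ∧
    ∀ i, (h : i < xs.length) → xs.get ⟨i, h⟩ ∈ l.getD i ∅ ∩ l.getD (i+1) ∅

/-- A proper chain: `|Eᵢ ∩ Eᵢ₊₁| = |Eᵢ₊₁| - 1` for all `i`. -/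
def IsProperChain (H : SimpleHypergraph V) (l : List (Finset V)) : Prop :=
  IsHChain H l ∧ ∀ i, i + 1 < l.length →
    (l.getD i ∅ ∩ l.getD (i+1) ∅).card + 1 = (l.getD (i+1) ∅).card

/-- A proper irredundant chain: no proper subsequence with the same endpoints is a proper
chain. -/
def IsPIChain (H : SimpleHypergraph V) (l : List (Finset V)) : Prop :=
  IsProperChain H l ∧ ∀ l' : List (Finset V), l'.Sublist l → l' ≠ l →
    l'.head? = l.head? → l'.getLast? = l.getLast? → ¬ IsProperChain H l'

/-- The distance between two edges: minimal length of a proper irredundant chain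
from `E` to `F` (`∞` if there is none). -/
def edgeDist (H : SimpleHypergraph V) (E F : Finset V) : ℕ∞ :=
  sInf ((fun l : List (Finset V) => ((l.length - 1 : ℕ) : ℕ∞)) ''
    {l | IsPIChain H l ∧ l.head? = some E ∧ l.getLast? = some F})

/-- A `d`-uniform properly-connected hypergraph. -/
def UniformPC (H : SimpleHypergraph V) (d : ℕ) : Prop :=
  (∀ e ∈ H.edges, e.card = d) ∧
  ∀ E ∈ H.edges, ∀ F ∈ H.edges, (E ∩ F).Nonempty →
    edgeDist H E F = ((d - (E ∩ F).card : ℕ) : ℕ∞)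

/-- The sub-hypergraph consisting of the edges satisfying `P`. -/
def SimpleHypergraph.restrict (H : SimpleHypergraph V) (P : Finset V → Prop) :
    SimpleHypergraph V where
  edges := H.edges.filter P
  card_ge := fun e he => H.card_ge e (Finset.mem_filter.mp he).1
  antichain := fun e he f hf hef =>
    H.antichain e (Finset.mem_filter.mp he).1 f (Finset.mem_filter.mp hf).1 hef

/-- The vertex neighbor set `N(E)` of an edge: union of `F \ E` over edges at distance 1. -/
def nbrSet (H : SimpleHypergraph V) (E : Finset V) : Finset V :=
  (H.edges.filter fun F => edgeDist H E F = 1).sup fun F => F \ E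

variable (k : Type*) [Field k]

/-- The squarefree monomial attached to an edge. -/
def edgeMonomial (E : Finset V) : MvPolynomial V k := ∏ x ∈ E, MvPolynomial.X x

/-- The edge ideal of a hypergraph. -/
def edgeIdeal (H : SimpleHypergraph V) : Ideal (MvPolynomial V k) :=
  Ideal.span ((fun E => edgeMonomial k E) '' ↑H.edges)

/-- The exponent vector of the squarefree monomial attached to an edge. -/
def mexp (E : Finset V) : V →₀ ℕ := ∑ x ∈ E, Finsupp.single x 1

/-- The minimal monomials (w.r.t. divisibility) among a finite set of monomials;
these are the minimal generators of the monomial ideal they generate. -/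
def minMon (A : Finset (V →₀ ℕ)) : Finset (V →₀ ℕ) :=
  A.filter fun m => ∀ m' ∈ A, m' ≤ m → m' = m

/-- Minimal generators of `J ∩ K`, where `J`, `K` are the monomial ideals with
(minimal) monomial generators `A`, `B`: minimal elements among the pairwise lcm's. -/
def interMin (A B : Finset (V →₀ ℕ)) : Finset (V →₀ ℕ) :=
  minMon ((A ×ˢ B).image fun p => p.1 ⊔ p.2)

/-- Eliahou–Kervaire splitting: the monomial ideal generated by `A ∪ B` is split as
the sum of the ideals generated by `A` and by `B`. -/
def IsSplitting (A B : Finset (V →₀ ℕ)) : Prop :=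
  A.Nonempty ∧ B.Nonempty ∧ Disjoint A B ∧
  (∀ m ∈ A ∪ B, ∀ m' ∈ A ∪ B, m' ≤ m → m' = m) ∧
  ∃ φ ψ : (V →₀ ℕ) → (V →₀ ℕ),
    (∀ w ∈ interMin A B, φ w ∈ A ∧ ψ w ∈ B ∧ w = φ w ⊔ ψ w) ∧
    ∀ S ⊆ interMin A B, S.Nonempty → S.sup φ < S.sup id ∧ S.sup ψ < S.sup id

/-- A splitting edge of a hypergraph: `I(H) = (x^E) + I(H \ E)` is a splitting. -/
def IsSplittingEdge (H : SimpleHypergraph V) (E : Finset V) : Prop :=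
  E ∈ H.edges ∧ IsSplitting {mexp E} ((H.edges.erase E).image mexp)

variable [LinearOrder V]

/-- Total degree of a monomial. -/
def mdeg (m : V →₀ ℕ) : ℕ := m.sum fun _ e => e

/-- Basis of the degree-`j` part of the `i`-th term of the Taylor complex of the monomial
ideal generated by `G`: `i`-element subsets of `G` whose lcm has degree `j`. -/
def TaylorIndex (G : Finset (V →₀ ℕ)) (i j : ℕ) : Finset (Finset (V →₀ ℕ)) :=
  G.powerset.filter fun S => S.card = i ∧ mdeg (S.sup id) = j

/-- Matrix of the Taylor-complex differential `T_{i+1} → T_i` reduced mod the maximal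
ideal, in homological degree-`j` graded part. -/
def taylorMatrix (G : Finset (V →₀ ℕ)) (i j : ℕ) :
    Matrix (TaylorIndex G i j) (TaylorIndex G (i+1) j) k :=
  fun S' S =>
    if (S' : Finset (V →₀ ℕ)) ⊆ (S : Finset (V →₀ ℕ)) ∧
        (S' : Finset (V →₀ ℕ)).sup id = (S : Finset (V →₀ ℕ)).sup id then
      ∑ m ∈ (S : Finset (V →₀ ℕ)) \ (S' : Finset (V →₀ ℕ)),
        (-1 : k) ^ ((S' : Finset (V →₀ ℕ)).filter fun a => toLex a < toLex m).card
    else 0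

/-- The Taylor-complex differential reduced mod the maximal ideal. -/
def taylorBoundary (G : Finset (V →₀ ℕ)) (i j : ℕ) :
    ((TaylorIndex G (i+1) j) → k) →ₗ[k] ((TaylorIndex G i j) → k) :=
  Matrix.mulVecLin (taylorMatrix k G i j)

/-- The graded Betti number `β_{i,j}` of the monomial ideal generated by `G`, computed as
the dimension of the degree-`j` part of the `i`-th homology of the Taylor complex tensored
with the residue field. -/
def monomialBetti (G : Finset (V →₀ ℕ)) (i j : ℕ) : ℕ :=
  Module.finrank k (LinearMap.ker (taylorBoundary k G i j)) -
  Module.finrank k (LinearMap.range (taylorBoundary k G (i+1) j))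

/-- Castelnuovo–Mumford regularity of the monomial ideal generated by `G`. -/
def monReg (G : Finset (V →₀ ℕ)) : ℕ :=
  sSup {r | ∃ i j, monomialBetti k G i j ≠ 0 ∧ r + i = j}

/-- Projective dimension of the monomial ideal generated by `G`. -/
def monPdim (G : Finset (V →₀ ℕ)) : ℕ :=
  sSup {i | ∃ j, monomialBetti k G i j ≠ 0}

/-- Graded Betti numbers of the edge ideal of a hypergraph. -/
def edgeBetti (H : SimpleHypergraph V) (i j : ℕ) : ℕ :=
  monomialBetti k (H.edges.image mexp) i j

/-- Regularity of the edge ideal of a hypergraph. -/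
def edgeReg (H : SimpleHypergraph V) : ℕ :=
  monReg k (H.edges.image mexp)


set_option linter.unusedSectionVars false

section AuxMon
variable {V : Type*} [DecidableEq V]

lemma mexp_apply (E : Finset V) (x : V) : mexp E x = if x ∈ E then 1 else 0 := by
  classical
  rw [mexp, Finset.sum_apply']
  simp [Finsupp.single_apply]

lemma mexp_support (E : Finset V) : (mexp E).support = E := by
  ext x; simp [Finsupp.mem_support_iff, mexp_apply]

lemma mexp_injective : Function.Injective (mexp (V := V)) := by
  intro A B h
  have := congrArg Finsupp.support h
  simpa [mexp_support] using this

lemma mexp_le_iff {A B : Finset V} : mexp A ≤ mexp B ↔ A ⊆ B := by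
  constructor
  · intro h x hx
    have := h x
    rw [mexp_apply, mexp_apply] at this
    by_contra hxB
    simp [hx, hxB] at this
  · intro h x
    rw [mexp_apply, mexp_apply]
    by_cases hx : x ∈ A
    · simp [hx, h hx]
    · simp [hx]

lemma mexp_union (A B : Finset V) : mexp (A ∪ B) = mexp A ⊔ mexp B := by
  ext x
  rw [Finsupp.sup_apply, mexp_apply, mexp_apply, mexp_apply]
  by_cases hA : x ∈ A <;> by_cases hB : x ∈ B <;> simp [hA, hB]

lemma mexp_bot : mexp (∅ : Finset V) = 0 := by
  ext x; simp [mexp_apply]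

lemma mdeg_mexp (E : Finset V) : mdeg (mexp E) = E.card := by
  rw [mdeg, Finsupp.sum, mexp_support]
  rw [Finset.card_eq_sum_ones]
  refine Finset.sum_congr rfl fun x hx => ?_
  rw [mexp_apply, if_pos hx]

lemma mdeg_mono {a b : V →₀ ℕ} (h : a ≤ b) : mdeg a ≤ mdeg b := by
  rw [mdeg, mdeg, Finsupp.sum, Finsupp.sum]
  have hsub : a.support ⊆ b.support := Finsupp.support_mono h
  calc ∑ x ∈ a.support, a x ≤ ∑ x ∈ b.support, a x :=
        Finset.sum_le_sum_of_subset hsub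
    _ ≤ ∑ x ∈ b.support, b x := Finset.sum_le_sum fun x _ => h x

lemma mdeg_sup_le' (a b : V →₀ ℕ) : mdeg (a ⊔ b) ≤ mdeg a + mdeg b := by
  have h1 : (a ⊔ b) ≤ a + b := by
    intro x
    rw [Finsupp.sup_apply]
    exact sup_le (le_add_right (le_refl _)) (le_add_left (le_refl _))
  calc mdeg (a ⊔ b) ≤ mdeg (a + b) := mdeg_mono h1
    _ = mdeg a + mdeg b := by
        rw [mdeg, mdeg, mdeg]
        exact Finsupp.sum_add_index' (fun _ => rfl) (fun _ _ _ => rfl)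

lemma mexp_finset_sup (S : Finset (Finset V)) :
    mexp (S.sup id) = (S.image mexp).sup id := by
  rw [Finset.sup_image]
  exact Finset.comp_sup_eq_sup_comp mexp (fun A B => mexp_union A B) mexp_bot

end AuxMon

section AuxDisj
variable {V : Type*} [DecidableEq V]

lemma card_sup_le_sum (S : Finset (Finset V)) : (S.sup id).card ≤ ∑ E ∈ S, E.card := by
  classical
  induction S using Finset.induction_on with
  | empty => simp
  | @insert A S hA ih =>
    rw [Finset.sup_insert, Finset.sum_insert hA]
    calc (id A ⊔ S.sup id).card ≤ A.card + (S.sup id).card := Finset.card_union_le _ _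
      _ ≤ A.card + ∑ E ∈ S, E.card := by omega

lemma pairwiseDisjoint_of_card_sup (S : Finset (Finset V))
    (h : (S.sup id).card = ∑ E ∈ S, E.card) :
    ∀ E ∈ S, ∀ F ∈ S, E ≠ F → Disjoint E F := by
  classical
  induction S using Finset.induction_on with
  | empty => simp
  | @insert A S hA ih =>
    rw [Finset.sup_insert, Finset.sum_insert hA] at h
    have hU : (S.sup id).card = ∑ E ∈ S, E.card := by
      have h1 : (id A ⊔ S.sup id).card ≤ A.card + (S.sup id).card :=
        Finset.card_union_le _ _
      have h2 := card_sup_le_sum S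
      omega
    have hcard : (A ∪ S.sup id).card = A.card + (S.sup id).card := by
      have : (id A ⊔ S.sup id) = A ∪ S.sup id := rfl
      rw [this] at h; omega
    have hdisjU : Disjoint A (S.sup id) := by
      have := Finset.card_union_add_card_inter A (S.sup id)
      have hint : (A ∩ S.sup id).card = 0 := by omega
      rw [Finset.card_eq_zero] at hint
      exact Finset.disjoint_iff_inter_eq_empty.mpr hint
    intro E hE F hF hEF
    have key : ∀ E ∈ S, Disjoint A E := by
      intro E hE
      have hle : id E ≤ S.sup id := Finset.le_sup hE
      exact hdisjU.mono_right hle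
    rcases Finset.mem_insert.mp hE with rfl | hE'
    · rcases Finset.mem_insert.mp hF with rfl | hF'
      · exact absurd rfl hEF
      · exact key F hF'
    · rcases Finset.mem_insert.mp hF with rfl | hF'
      · exact (key E hE').symm
      · exact ih hU E hE' F hF' hEF

lemma card_sup_of_pairwiseDisjoint (S : Finset (Finset V))
    (h : ∀ E ∈ S, ∀ F ∈ S, E ≠ F → Disjoint E F) :
    (S.sup id).card = ∑ E ∈ S, E.card := by
  classical
  rw [Finset.sup_eq_biUnion]
  exact Finset.card_biUnion h

end AuxDisj

section AuxChain
variable {V : Type*} [DecidableEq V]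

lemma getD_zero_of_head? {l : List (Finset V)} {E : Finset V} (h : l.head? = some E) :
    l.getD 0 ∅ = E := by
  cases l with
  | nil => simp at h
  | cons a t => simp at h; simp [h]

lemma length_pos_of_head? {l : List (Finset V)} {E : Finset V} (h : l.head? = some E) :
    0 < l.length := by
  cases l with
  | nil => simp at h
  | cons a t => simp

lemma getD_last_of_getLast? {l : List (Finset V)} {F : Finset V} (h : l.getLast? = some F) :
    l.getD (l.length - 1) ∅ = F := by
  rw [List.getLast?_eq_getElem?] at h
  rw [List.getD_eq_getElem?_getD, h]
  rfl

lemma mem_iff_getD {l : List (Finset V)} {C : Finset V} (hC : C ≠ ∅) :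
    C ∈ l ↔ ∃ j, j < l.length ∧ l.getD j ∅ = C := by
  rw [List.mem_iff_getElem]
  constructor
  · rintro ⟨j, hj, rfl⟩
    exact ⟨j, hj, List.getD_eq_getElem _ _ hj⟩
  · rintro ⟨j, hj, h⟩
    exact ⟨j, hj, by rw [← List.getD_eq_getElem _ ∅ hj, h]⟩

lemma getD_ne_of_nodup {l : List (Finset V)} (hnd : l.Nodup) {j j' : ℕ}
    (hj : j < l.length) (hj' : j' < l.length) (hne : j ≠ j') :
    l.getD j ∅ ≠ l.getD j' ∅ := by
  rw [List.getD_eq_getElem _ _ hj, List.getD_eq_getElem _ _ hj']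
  intro h
  exact hne (hnd.getElem_inj_iff.mp h)

lemma getLast?_cons_of_ne_nil {l : List (Finset V)} (h : l ≠ []) (F : Finset V) :
    (F :: l).getLast? = l.getLast? := by
  cases l with
  | nil => exact absurd rfl h
  | cons a t => rw [List.getLast?_cons_cons]

/-- generic step inequality -/
lemma inter_card_step (A B X : Finset V) :
    (A ∩ X).card ≤ (B ∩ X).card + (A \ B).card := by
  have hsub : A ∩ X ⊆ (B ∩ X) ∪ (A \ B) := by
    intro x hx
    rcases Finset.mem_inter.mp hx with ⟨hxA, hxX⟩
    by_cases hxB : x ∈ B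
    · exact Finset.mem_union_left _ (Finset.mem_inter.mpr ⟨hxB, hxX⟩)
    · exact Finset.mem_union_right _ (Finset.mem_sdiff.mpr ⟨hxA, hxB⟩)
  calc (A ∩ X).card ≤ ((B ∩ X) ∪ (A \ B)).card := Finset.card_le_card hsub
    _ ≤ (B ∩ X).card + (A \ B).card := Finset.card_union_le _ _

variable {H : SimpleHypergraph V} {d : ℕ} (hpc : UniformPC H d)

lemma chain_mem_edges {l : List (Finset V)} (hl : IsProperChain H l) {j : ℕ}
    (hj : j < l.length) : l.getD j ∅ ∈ H.edges := by
  obtain ⟨⟨-, -, hmem, -⟩, -⟩ := hl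
  refine hmem _ ?_
  rw [List.getD_eq_getElem _ _ hj]
  exact List.getElem_mem hj

include hpc in
lemma chain_card {l : List (Finset V)} (hl : IsProperChain H l) {j : ℕ}
    (hj : j < l.length) : (l.getD j ∅).card = d :=
  hpc.1 _ (chain_mem_edges hl hj)

include hpc in
lemma chain_inter_card {l : List (Finset V)} (hl : IsProperChain H l) {j : ℕ}
    (hj : j + 1 < l.length) :
    (l.getD j ∅ ∩ l.getD (j+1) ∅).card + 1 = d := by
  rw [hl.2 j hj]
  exact chain_card hpc hl hj

include hpc in
lemma chain_sdiff_one {l : List (Finset V)} (hl : IsProperChain H l) {j : ℕ}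
    (hj : j + 1 < l.length) :
    (l.getD j ∅ \ l.getD (j+1) ∅).card = 1 ∧ (l.getD (j+1) ∅ \ l.getD j ∅).card = 1 := by
  have h1 := chain_inter_card hpc hl hj
  have h2 := chain_card hpc hl (Nat.lt_of_succ_lt hj)
  have h3 := chain_card hpc hl hj
  have e1 := Finset.card_sdiff_add_card_inter (l.getD j ∅) (l.getD (j+1) ∅)
  have e2 := Finset.card_sdiff_add_card_inter (l.getD (j+1) ∅) (l.getD j ∅)
  rw [Finset.inter_comm] at e2
  omega

include hpc in
lemma chain_drop_forward {l : List (Finset V)} (hl : IsProperChain H l) (X : Finset V)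
    {p q : ℕ} (hpq : p ≤ q) (hq : q < l.length) :
    (l.getD p ∅ ∩ X).card ≤ (l.getD q ∅ ∩ X).card + (q - p) := by
  induction q with
  | zero =>
    have : p = 0 := Nat.le_zero.mp hpq
    subst this; simp
  | succ q ih =>
    rcases Nat.eq_or_lt_of_le hpq with rfl | hlt
    · simp
    · have hq' : q < l.length := Nat.lt_of_succ_lt hq
      have step := inter_card_step (l.getD q ∅) (l.getD (q+1) ∅) X
      have hsd := (chain_sdiff_one hpc hl hq).1
      have ihq := ih (Nat.lt_succ_iff.mp hlt) hq'
      omega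

include hpc in
lemma chain_drop_backward {l : List (Finset V)} (hl : IsProperChain H l) (X : Finset V)
    {p q : ℕ} (hpq : p ≤ q) (hq : q < l.length) :
    (l.getD q ∅ ∩ X).card ≤ (l.getD p ∅ ∩ X).card + (q - p) := by
  induction q with
  | zero =>
    have : p = 0 := Nat.le_zero.mp hpq
    subst this; simp
  | succ q ih =>
    rcases Nat.eq_or_lt_of_le hpq with rfl | hlt
    · simp
    · have hq' : q < l.length := Nat.lt_of_succ_lt hq
      have step := inter_card_step (l.getD (q+1) ∅) (l.getD q ∅) X
      have hsd := (chain_sdiff_one hpc hl hq).2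
      have ihq := ih (Nat.lt_succ_iff.mp hlt) hq'
      omega

end AuxChain

section AuxDist
variable {V : Type*} [DecidableEq V] {H : SimpleHypergraph V} {d : ℕ}

lemma exists_PI_sublist :
    ∀ (n : ℕ) (l : List (Finset V)), l.length ≤ n → IsProperChain H l →
    ∃ l', l'.Sublist l ∧ l'.head? = l.head? ∧ l'.getLast? = l.getLast? ∧ IsPIChain H l' := by
  intro n
  induction n with
  | zero =>
    intro l hlen hl
    obtain ⟨⟨hne, -⟩, -⟩ := hl
    cases l with
    | nil => exact absurd rfl hne
    | cons a t => simp at hlen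
  | succ n ih =>
    intro l hlen hl
    by_cases hPI : IsPIChain H l
    · exact ⟨l, List.Sublist.refl l, rfl, rfl, hPI⟩
    · rw [IsPIChain, not_and_or] at hPI
      rcases hPI with h | h
      · exact absurd hl h
      · push_neg at h
        obtain ⟨l', hsub, hne', hhead, hlast, hl'⟩ := h
        have hlt : l'.length < l.length := by
          rcases Nat.lt_or_ge l'.length l.length with h' | h'
          · exact h'
          · exact absurd (hsub.eq_of_length (Nat.le_antisymm hsub.length_le h')) hne'
        obtain ⟨l'', hsub'', hh'', hla'', hPI''⟩ := ih l' (by omega) hl'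
        exact ⟨l'', hsub''.trans hsub, hh''.trans hhead, hla''.trans hlast, hPI''⟩

lemma edgeDist_le_of_properChain {l : List (Finset V)} {E F : Finset V}
    (hl : IsProperChain H l) (hE : l.head? = some E) (hF : l.getLast? = some F) :
    edgeDist H E F ≤ ((l.length - 1 : ℕ) : ℕ∞) := by
  obtain ⟨l', hsub, hh, hla, hPI⟩ := exists_PI_sublist l.length l (le_refl _) hl
  have hmem : ((l'.length - 1 : ℕ) : ℕ∞) ∈
      ((fun l : List (Finset V) => ((l.length - 1 : ℕ) : ℕ∞)) ''
        {l | IsPIChain H l ∧ l.head? = some E ∧ l.getLast? = some F}) :=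
    ⟨l', ⟨hPI, hh.trans hE, hla.trans hF⟩, rfl⟩
  calc edgeDist H E F ≤ ((l'.length - 1 : ℕ) : ℕ∞) := sInf_le hmem
    _ ≤ ((l.length - 1 : ℕ) : ℕ∞) := by
        have := hsub.length_le
        exact_mod_cast Nat.sub_le_sub_right this 1

variable (hpc : UniformPC H d)

include hpc in
lemma le_edgeDist_of_disjoint {E F : Finset V} (hE : E ∈ H.edges)
    (hdisj : Disjoint E F) : (d : ℕ∞) ≤ edgeDist H E F := by
  refine le_sInf ?_
  rintro b ⟨l, ⟨hPI, hh, hla⟩, rfl⟩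
  have hl : IsProperChain H l := hPI.1
  have hlen0 : 0 < l.length := length_pos_of_head? hh
  have h0 : l.getD 0 ∅ = E := getD_zero_of_head? hh
  have hn : l.getD (l.length - 1) ∅ = F := getD_last_of_getLast? hla
  have := chain_drop_forward hpc hl E (Nat.zero_le (l.length - 1)) (by omega)
  rw [h0, hn, Finset.inter_self] at this
  have hcardE : E.card = d := hpc.1 _ hE
  have hEF : (F ∩ E).card = 0 := by
    rw [Finset.card_eq_zero, ← Finset.disjoint_iff_inter_eq_empty]
    exact hdisj.symm
  rw [hcardE, hEF] at this
  show (d : ℕ∞) ≤ ((l.length - 1 : ℕ) : ℕ∞)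
  exact_mod_cast (by omega : d ≤ l.length - 1)

lemma edgeDist_realize {E F : Finset V} (h : edgeDist H E F ≠ ⊤) :
    ∃ l, IsPIChain H l ∧ l.head? = some E ∧ l.getLast? = some F ∧
      ((l.length - 1 : ℕ) : ℕ∞) = edgeDist H E F := by
  have hne : ((fun l : List (Finset V) => ((l.length - 1 : ℕ) : ℕ∞)) ''
      {l | IsPIChain H l ∧ l.head? = some E ∧ l.getLast? = some F}).Nonempty := by
    by_contra hc
    rw [Set.not_nonempty_iff_eq_empty] at hc
    rw [edgeDist, hc, sInf_empty] at h
    exact h rfl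
  have : sInf ((fun l : List (Finset V) => ((l.length - 1 : ℕ) : ℕ∞)) ''
      {l | IsPIChain H l ∧ l.head? = some E ∧ l.getLast? = some F}) ∈ _ := csInf_mem hne
  obtain ⟨l, ⟨hPI, hh, hla⟩, hval⟩ := this
  exact ⟨l, hPI, hh, hla, hval⟩

end AuxDist

section AuxPrepend
variable {V : Type*} [DecidableEq V] {H : SimpleHypergraph V} {d : ℕ} (hpc : UniformPC H d)

include hpc in
lemma inter_card_lt_of_ne {K F : Finset V} (hK : K ∈ H.edges) (hF : F ∈ H.edges)
    (hne : K ≠ F) : (K ∩ F).card < d := by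
  have hKd : K.card = d := hpc.1 K hK
  by_contra hc
  push_neg at hc
  have hsub : K ∩ F ⊆ K := Finset.inter_subset_left
  have hKsub : K ∩ F = K :=
    Finset.eq_of_subset_of_card_le hsub (by omega : K.card ≤ (K ∩ F).card)
  have : K ⊆ F := by rw [← hKsub]; exact Finset.inter_subset_right
  exact hne (H.antichain K hK F hF this)

include hpc in
lemma prepend_proper (hd2 : 2 ≤ d) (F K F' : Finset V) (hF : F ∈ H.edges)
    {l : List (Finset V)} (hl : IsProperChain H l)
    (hhead : l.head? = some K) (hlast : l.getLast? = some F')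
    (hcard : (F ∩ K).card + 1 = d)
    (hmeet : ∀ j, j < l.length → (l.getD j ∅ ∩ F').Nonempty)
    (hFdisj : Disjoint F F') (hlen : l.length ≤ d) :
    IsProperChain H (F :: l) := by
  obtain ⟨⟨hne, hnd, hmem, xs, hxsnd, hxslen, hxsmem⟩, hprop⟩ := hl
  have h0 : l.getD 0 ∅ = K := getD_zero_of_head? hhead
  have hlenpos : 0 < l.length := length_pos_of_head? hhead
  have hKl : K ∈ l := by
    rw [← h0, List.getD_eq_getElem _ _ hlenpos]
    exact List.getElem_mem hlenpos
  have hKedge : K ∈ H.edges := hmem K hKl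
  have hl2 : 2 ≤ l.length := by
    by_contra hc
    have h1 : l.length = 1 := by omega
    have hlast' : l.getD (l.length - 1) ∅ = F' := getD_last_of_getLast? hlast
    rw [h1] at hlast'
    simp only [Nat.sub_self] at hlast'
    rw [h0] at hlast'
    subst hlast'
    have : F ∩ K = ∅ := Finset.disjoint_iff_inter_eq_empty.mp hFdisj
    rw [this] at hcard
    simp at hcard
    omega
  have hFnotin : F ∉ l := by
    intro hFl
    have hFne : F ≠ ∅ := by
      intro hemp
      have := hpc.1 F hF
      rw [hemp] at this
      simp at this
      omega
    obtain ⟨j, hj, hjF⟩ := (mem_iff_getD hFne).mp hFl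
    obtain ⟨y, hy⟩ := hmeet j hj
    rw [hjF] at hy
    rcases Finset.mem_inter.mp hy with ⟨hyF, hyF'⟩
    exact Finset.disjoint_left.mp hFdisj hyF hyF'
  -- choose x₀
  have hx0 : ∃ x₀ ∈ F ∩ K, x₀ ∉ xs.toFinset := by
    by_contra hc
    push_neg at hc
    have hsub : F ∩ K ⊆ xs.toFinset := hc
    have hT : xs.toFinset.card = xs.length := List.toFinset_card_of_nodup hxsnd
    have hcard2 : xs.toFinset.card ≤ (F ∩ K).card := by omega
    have hTeq : F ∩ K = xs.toFinset := Finset.eq_of_subset_of_card_le hsub hcard2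
    have hxslenpos : 0 < xs.length := by omega
    have hi : xs.length - 1 < xs.length := by omega
    have hx := hxsmem (xs.length - 1) hi
    have hidx : xs.length - 1 + 1 = l.length - 1 := by omega
    rw [hidx, getD_last_of_getLast? hlast] at hx
    have hxl : xs.get ⟨xs.length - 1, hi⟩ ∈ xs.toFinset :=
      List.mem_toFinset.mpr (xs.get_mem ⟨xs.length - 1, hi⟩)
    rw [← hTeq] at hxl
    rcases Finset.mem_inter.mp hxl with ⟨hxF, -⟩
    rcases Finset.mem_inter.mp hx with ⟨-, hxF'⟩
    exact Finset.disjoint_left.mp hFdisj hxF hxF'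
  obtain ⟨x₀, hx₀FK, hx₀xs⟩ := hx0
  refine ⟨⟨List.cons_ne_nil _ _, List.nodup_cons.mpr ⟨hFnotin, hnd⟩, ?_,
      x₀ :: xs, List.nodup_cons.mpr ⟨fun h => hx₀xs (List.mem_toFinset.mpr h), hxsnd⟩,
      by simpa using hxslen, ?_⟩, ?_⟩
  · intro e he
    rcases List.mem_cons.mp he with rfl | he
    · exact hF
    · exact hmem e he
  · intro i hi
    match i with
    | 0 =>
      simp only [List.get]
      rw [List.getD_cons_zero, List.getD_cons_succ, h0]
      exact hx₀FK
    | (j+1) =>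
      have hj : j < xs.length := by simpa using hi
      have : (x₀ :: xs).get ⟨j+1, hi⟩ = xs.get ⟨j, hj⟩ := rfl
      rw [this, List.getD_cons_succ, List.getD_cons_succ]
      exact hxsmem j hj
  · intro i hi
    match i with
    | 0 =>
      rw [List.getD_cons_zero, List.getD_cons_succ, h0]
      rw [hcard]
      exact (hpc.1 K hKedge).symm
    | (j+1) =>
      rw [List.getD_cons_succ, List.getD_cons_succ]
      exact hprop j (by simpa using hi)

end AuxPrepend

section AuxLemL
variable {V : Type*} [DecidableEq V] {H : SimpleHypergraph V} {d : ℕ} (hpc : UniformPC H d)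

include hpc in
lemma lemL_main (hd2 : 2 ≤ d) (S' : Finset (Finset V)) (hS'sub : ∀ F ∈ S', F ∈ H.edges)
    (hS'disj : ∀ E ∈ S', ∀ F ∈ S', E ≠ F → Disjoint E F) :
    ∀ (m : ℕ) (K : Finset V), K ∈ H.edges → K ∉ S' → K ⊆ S'.sup id →
    (∃ F ∈ S', (K ∩ F).Nonempty ∧ d ≤ (K ∩ F).card + 1 + m) →
    ∃ F ∈ S', ∃ F' ∈ S', F ≠ F' ∧ ¬ ((d : ℕ∞) + 1 ≤ edgeDist H F F') := by
  intro m
  induction m with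
  | zero =>
    intro K hK hKnot hKsub hex
    obtain ⟨F, hFS, hKFne, hbound⟩ := hex
    have hFE : F ∈ H.edges := hS'sub F hFS
    have hKd : K.card = d := hpc.1 K hK
    have hKneF : K ≠ F := fun h => hKnot (h ▸ hFS)
    have hKFlt : (K ∩ F).card < d := inter_card_lt_of_ne hpc hK hFE hKneF
    have ha : (K ∩ F).card = d - 1 := by omega
    -- find F'
    have hsd : (K \ F).Nonempty := by
      rw [← Finset.card_pos]
      have := Finset.card_sdiff_add_card_inter K F
      omega
    obtain ⟨x, hx⟩ := hsd
    rcases Finset.mem_sdiff.mp hx with ⟨hxK, hxF⟩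
    obtain ⟨F', hF'S, hxF'⟩ := Finset.mem_sup.mp (hKsub hxK)
    rw [id] at hxF'
    have hFF' : F ≠ F' := fun h => hxF (h ▸ hxF')
    have hdisjFF' : Disjoint F F' := hS'disj F hFS F' hF'S hFF'
    have hKF'ne : (K ∩ F').Nonempty := ⟨x, Finset.mem_inter.mpr ⟨hxK, hxF'⟩⟩
    have hKneF' : K ≠ F' := by
      intro h
      subst h
      have : ¬ (K ∩ F).Nonempty := by
        rw [Finset.inter_comm]
        exact Finset.disjoint_iff_inter_eq_empty.mp hdisjFF' ▸ (by simp)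
      exact this hKFne
    have hb1 : 1 ≤ (K ∩ F').card := Finset.card_pos.mpr hKF'ne
    have hblt : (K ∩ F').card < d := inter_card_lt_of_ne hpc hK (hS'sub F' hF'S) hKneF'
    have hdist : edgeDist H K F' = ((d - (K ∩ F').card : ℕ) : ℕ∞) :=
      hpc.2 K hK F' (hS'sub F' hF'S) hKF'ne
    obtain ⟨l, hPI, hh, hla, hval⟩ := edgeDist_realize (h := by
      rw [hdist]; exact ENat.coe_ne_top _)
    have hlchain : IsProperChain H l := hPI.1
    have hlen : l.length = d - (K ∩ F').card + 1 := by
      rw [hdist] at hval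
      have := Nat.cast_inj (R := ℕ∞) |>.mp hval
      have hpos := length_pos_of_head? hh
      omega
    have hmeet : ∀ j, j < l.length → (l.getD j ∅ ∩ F').Nonempty := by
      intro j hj
      have hbd := chain_drop_backward hpc hlchain F' (p := j) (q := l.length - 1)
        (by omega) (by omega)
      rw [getD_last_of_getLast? hla, Finset.inter_self] at hbd
      have hF'd : F'.card = d := hpc.1 F' (hS'sub F' hF'S)
      rw [← Finset.card_pos]
      omega
    have hprep : IsProperChain H (F :: l) := by
      refine prepend_proper hpc hd2 F K F' hFE hlchain hh hla ?_ hmeet hdisjFF' (by omega)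
      rw [Finset.inter_comm]; omega
    have hle := edgeDist_le_of_properChain hprep rfl (by
      rw [getLast?_cons_of_ne_nil hlchain.1.1 F]; exact hla)
    refine ⟨F, hFS, F', hF'S, hFF', ?_⟩
    intro hge
    have : ((d : ℕ∞) + 1 : ℕ∞) ≤ (((F :: l).length - 1 : ℕ) : ℕ∞) := le_trans hge hle
    have h2 : (((d + 1 : ℕ) : ℕ∞)) ≤ (((F :: l).length - 1 : ℕ) : ℕ∞) := by
      rw [Nat.cast_add, Nat.cast_one]; exact this
    have h3 : d + 1 ≤ (F :: l).length - 1 := Nat.cast_le.mp h2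
    simp only [List.length_cons] at h3
    omega
  | succ m ih =>
    intro K hK hKnot hKsub hex
    obtain ⟨F, hFS, hKFne, hbound⟩ := hex
    by_cases hcase : d ≤ (K ∩ F).card + 1 + m
    · exact ih K hK hKnot hKsub ⟨F, hFS, hKFne, hcase⟩
    · have hFE : F ∈ H.edges := hS'sub F hFS
      have hKd : K.card = d := hpc.1 K hK
      have hKneF : K ≠ F := fun h => hKnot (h ▸ hFS)
      have hKFlt : (K ∩ F).card < d := inter_card_lt_of_ne hpc hK hFE hKneF
      have ha1 : 1 ≤ (K ∩ F).card := Finset.card_pos.mpr hKFne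
      have hdist : edgeDist H K F = ((d - (K ∩ F).card : ℕ) : ℕ∞) :=
        hpc.2 K hK F hFE hKFne
      obtain ⟨l, hPI, hh, hla, hval⟩ := edgeDist_realize (h := by
        rw [hdist]; exact ENat.coe_ne_top _)
      have hlchain : IsProperChain H l := hPI.1
      have hnd : l.Nodup := hlchain.1.2.1
      have hlen : l.length = d - (K ∩ F).card + 1 := by
        rw [hdist] at hval
        have := Nat.cast_inj (R := ℕ∞) |>.mp hval
        have hpos := length_pos_of_head? hh
        omega
      have hlen3 : 3 ≤ l.length := by omega
      have h0 : l.getD 0 ∅ = K := getD_zero_of_head? hh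
      set K₁ := l.getD 1 ∅ with hK₁def
      have hK₁mem : K₁ ∈ H.edges := chain_mem_edges hlchain (by omega)
      have hK₁K : K₁ ≠ K := by
        rw [← h0]
        exact getD_ne_of_nodup hnd (by omega) (by omega) (by omega)
      have hinter01 : (K ∩ K₁).card + 1 = d := by
        have := chain_inter_card hpc hlchain (j := 0) (by omega)
        rw [h0] at this
        exact this
      have hK₁card : K₁.card = d := hpc.1 K₁ hK₁mem
      have hK₁F : (K ∩ F).card + 1 ≤ (K₁ ∩ F).card := by
        have hbd := chain_drop_backward hpc hlchain F (p := 1) (q := l.length - 1)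
          (by omega) (by omega)
        rw [getD_last_of_getLast? hla, Finset.inter_self, ← hK₁def] at hbd
        have hFd : F.card = d := hpc.1 F hFE
        omega
      have hsd1 : (K₁ \ K).card = 1 := by
        have e := Finset.card_sdiff_add_card_inter K₁ K
        rw [Finset.inter_comm] at e
        omega
      have hsubF : K₁ \ K ⊆ F := by
        have hsplit : K₁ ∩ F ⊆ (K ∩ F) ∪ ((K₁ \ K) ∩ F) := by
          intro y hy
          rcases Finset.mem_inter.mp hy with ⟨hy1, hy2⟩
          by_cases hyK : y ∈ K
          · exact Finset.mem_union_left _ (Finset.mem_inter.mpr ⟨hyK, hy2⟩)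
          · exact Finset.mem_union_right _
              (Finset.mem_inter.mpr ⟨Finset.mem_sdiff.mpr ⟨hy1, hyK⟩, hy2⟩)
        have hc1 : (K₁ ∩ F).card ≤ (K ∩ F).card + ((K₁ \ K) ∩ F).card :=
          le_trans (Finset.card_le_card hsplit) (Finset.card_union_le _ _)
        have hc2 : ((K₁ \ K) ∩ F).card ≤ (K₁ \ K).card :=
          Finset.card_le_card Finset.inter_subset_left
        have hc3 : (K₁ \ K).card ≤ ((K₁ \ K) ∩ F).card := by omega
        have heq : (K₁ \ K) ∩ F = K₁ \ K :=
          Finset.eq_of_subset_of_card_le Finset.inter_subset_left hc3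
        rw [← heq]
        exact Finset.inter_subset_right
      have hK₁sub : K₁ ⊆ S'.sup id := by
        intro y hy
        by_cases hyK : y ∈ K
        · exact hKsub hyK
        · have : y ∈ F := hsubF (Finset.mem_sdiff.mpr ⟨hy, hyK⟩)
          exact (Finset.le_sup (f := id) hFS : F ≤ S'.sup id) this
      have hK₁F' : K₁ ≠ F := by
        have : l.getD (l.length - 1) ∅ = F := getD_last_of_getLast? hla
        rw [← this]
        exact getD_ne_of_nodup hnd (by omega) (by omega) (by omega)
      have hK₁notin : K₁ ∉ S' := by
        intro hmem
        have hdisj : Disjoint K₁ F := hS'disj K₁ hmem F hFS hK₁F'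
        have : (K₁ ∩ F).card = 0 := by
          rw [Finset.card_eq_zero, ← Finset.disjoint_iff_inter_eq_empty]
          exact hdisj
        omega
      refine ih K₁ hK₁mem hK₁notin hK₁sub ⟨F, hFS, ?_, by omega⟩
      rw [← Finset.card_pos]
      omega

include hpc in
lemma lemL (hd2 : 2 ≤ d) (S' : Finset (Finset V)) (hS'sub : ∀ F ∈ S', F ∈ H.edges)
    (hS'disj : ∀ E ∈ S', ∀ F ∈ S', E ≠ F → Disjoint E F)
    (K : Finset V) (hK : K ∈ H.edges) (hKnot : K ∉ S') (hKsub : K ⊆ S'.sup id) :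
    ∃ F ∈ S', ∃ F' ∈ S', F ≠ F' ∧ ¬ ((d : ℕ∞) + 1 ≤ edgeDist H F F') := by
  have hKne : K.Nonempty := by
    rw [← Finset.card_pos, hpc.1 K hK]; omega
  obtain ⟨x, hxK⟩ := hKne
  obtain ⟨F, hFS, hxF⟩ := Finset.mem_sup.mp (hKsub hxK)
  rw [id] at hxF
  exact lemL_main hpc hd2 S' hS'sub hS'disj d K hK hKnot hKsub
    ⟨F, hFS, ⟨x, Finset.mem_inter.mpr ⟨hxK, hxF⟩⟩, by omega⟩

end AuxLemL

section AuxMiddle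
variable {V : Type*} [DecidableEq V] {H : SimpleHypergraph V} {d : ℕ} (hpc : UniformPC H d)

include hpc in
lemma exists_middle_edge (hd2 : 2 ≤ d) {E F : Finset V} (hE : E ∈ H.edges)
    (hF : F ∈ H.edges) (hdisj : Disjoint E F)
    (hdist : ¬ ((d : ℕ∞) + 1 ≤ edgeDist H E F)) :
    ∃ C ∈ H.edges, C ≠ E ∧ C ≠ F ∧ C ⊆ E ∪ F ∧
      (C ∩ E).Nonempty ∧ (C ∩ F).Nonempty := by
  have hEd : E.card = d := hpc.1 E hE
  have hFd : F.card = d := hpc.1 F hF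
  have hlow : (d : ℕ∞) ≤ edgeDist H E F := le_edgeDist_of_disjoint hpc hE hdisj
  have hEF : E ≠ F := by
    intro h
    subst h
    have : E = ∅ := (disjoint_self_iff_empty E).mp hdisj
    rw [this] at hEd
    simp at hEd
    omega
  have hntop : edgeDist H E F ≠ ⊤ := by
    intro h
    rw [h] at hdist
    exact hdist le_top
  obtain ⟨l, hPI, hh, hla, hval⟩ := edgeDist_realize hntop
  have hlchain : IsProperChain H l := hPI.1
  have hnd : l.Nodup := hlchain.1.2.1
  -- length = d + 1
  have hlenpos : 0 < l.length := length_pos_of_head? hh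
  have hlen : l.length = d + 1 := by
    have h1 : (d : ℕ∞) ≤ ((l.length - 1 : ℕ) : ℕ∞) := hval ▸ hlow
    have h2 : ¬ ((d : ℕ∞) + 1 ≤ ((l.length - 1 : ℕ) : ℕ∞)) := hval ▸ hdist
    have h1' : d ≤ l.length - 1 := Nat.cast_le.mp h1
    have h2' : ¬ (d + 1 ≤ l.length - 1) := by
      intro hc
      exact h2 (by rw [← Nat.cast_one, ← Nat.cast_add]; exact_mod_cast hc)
    omega
  have h0 : l.getD 0 ∅ = E := getD_zero_of_head? hh
  have hnlast : l.getD (l.length - 1) ∅ = F := getD_last_of_getLast? hla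
  set C := l.getD 1 ∅ with hCdef
  have hCmem : C ∈ H.edges := chain_mem_edges hlchain (by omega)
  have hCd : C.card = d := hpc.1 C hCmem
  have hCE : C ≠ E := by
    rw [← h0]
    exact getD_ne_of_nodup hnd (by omega) (by omega) (by omega)
  have hCF : C ≠ F := by
    rw [← hnlast]
    exact getD_ne_of_nodup hnd (by omega) (by omega) (by omega)
  have hCEcard : (C ∩ E).card = d - 1 := by
    have := chain_inter_card hpc hlchain (j := 0) (by omega)
    rw [h0, ← hCdef] at this
    rw [Finset.inter_comm]
    omega
  have hCFcard : 1 ≤ (C ∩ F).card := by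
    have hbd := chain_drop_backward hpc hlchain F (p := 1) (q := l.length - 1)
      (by omega) (by omega)
    rw [hnlast, Finset.inter_self, ← hCdef] at hbd
    omega
  have hsubEF : C ⊆ E ∪ F := by
    have hdisjCE : Disjoint (C ∩ E) (C ∩ F) := by
      exact Finset.disjoint_of_subset_left Finset.inter_subset_right
        (Finset.disjoint_of_subset_right Finset.inter_subset_right hdisj)
    have hunion : (C ∩ (E ∪ F)).card = (C ∩ E).card + (C ∩ F).card := by
      rw [Finset.inter_union_distrib_left]
      exact Finset.card_union_of_disjoint hdisjCE
    have hle : (C ∩ (E ∪ F)).card ≤ C.card :=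
      Finset.card_le_card Finset.inter_subset_left
    have hcf : (C ∩ F).card = 1 := by omega
    have : C.card ≤ (C ∩ (E ∪ F)).card := by omega
    have heq : C ∩ (E ∪ F) = C :=
      Finset.eq_of_subset_of_card_le Finset.inter_subset_left this
    rw [← heq]
    exact Finset.inter_subset_right
  refine ⟨C, hCmem, hCE, hCF, hsubEF, ?_, ?_⟩
  · rw [← Finset.card_pos]; omega
  · rw [← Finset.card_pos]; omega

end AuxMiddle

section AuxTaylor
variable {V : Type*} [DecidableEq V] [LinearOrder V] {H : SimpleHypergraph V} {d : ℕ}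

lemma subset_image_mexp {𝒮 : Finset (V →₀ ℕ)} (h : 𝒮 ⊆ H.edges.image mexp) :
    ∃ S : Finset (Finset V), S ⊆ H.edges ∧ 𝒮 = S.image mexp ∧ S.card = 𝒮.card := by
  refine ⟨𝒮.image Finsupp.support, ?_, ?_, ?_⟩
  · intro E hE
    obtain ⟨m, hm, rfl⟩ := Finset.mem_image.mp hE
    obtain ⟨E', hE', rfl⟩ := Finset.mem_image.mp (h hm)
    rw [mexp_support]
    exact hE'
  · rw [Finset.image_image]
    ext m
    simp only [Finset.mem_image, Function.comp_apply]
    constructor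
    · intro hm
      refine ⟨m, hm, ?_⟩
      obtain ⟨E', hE', rfl⟩ := Finset.mem_image.mp (h hm)
      rw [mexp_support]
    · rintro ⟨m', hm', rfl⟩
      obtain ⟨E', hE', rfl⟩ := Finset.mem_image.mp (h hm')
      rw [mexp_support]
      exact hm'
  · rw [Finset.card_image_of_injOn]
    intro m hm m' hm' hmm
    obtain ⟨E, hE, rfl⟩ := Finset.mem_image.mp (h hm)
    obtain ⟨E', hE', rfl⟩ := Finset.mem_image.mp (h hm')
    rw [mexp_support, mexp_support] at hmm
    rw [hmm]

lemma mem_taylor_iff {n j : ℕ} {𝒮 : Finset (V →₀ ℕ)} :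
    𝒮 ∈ TaylorIndex (H.edges.image mexp) n j ↔
    ∃ S : Finset (Finset V), S ⊆ H.edges ∧ S.card = n ∧ (S.sup id).card = j ∧
      𝒮 = S.image mexp := by
  rw [TaylorIndex, Finset.mem_filter, Finset.mem_powerset]
  constructor
  · rintro ⟨hsub, hcard, hdeg⟩
    obtain ⟨S, hS, rfl, hScard⟩ := subset_image_mexp hsub
    refine ⟨S, hS, by omega, ?_, rfl⟩
    rw [← mexp_finset_sup, mdeg_mexp] at hdeg
    exact hdeg
  · rintro ⟨S, hS, hcard, hsup, rfl⟩
    refine ⟨Finset.image_subset_image hS, ?_, ?_⟩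
    · rw [Finset.card_image_of_injective _ mexp_injective]; exact hcard
    · rw [← mexp_finset_sup, mdeg_mexp]; exact hsup

variable (hpc : UniformPC H d)

include hpc in
lemma supcard_of_pdisjoint {S : Finset (Finset V)} (hS : S ⊆ H.edges)
    (h : ∀ E ∈ S, ∀ F ∈ S, E ≠ F → Disjoint E F) :
    (S.sup id).card = d * S.card := by
  rw [card_sup_of_pairwiseDisjoint S h]
  rw [Finset.sum_congr rfl (fun E hE => hpc.1 E (hS hE))]
  rw [Finset.sum_const, smul_eq_mul, mul_comm]

include hpc in
lemma pdisjoint_of_supcard {S : Finset (Finset V)} (hS : S ⊆ H.edges)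
    (h : (S.sup id).card = d * S.card) :
    ∀ E ∈ S, ∀ F ∈ S, E ≠ F → Disjoint E F := by
  apply pairwiseDisjoint_of_card_sup
  rw [h, Finset.sum_congr rfl (fun E hE => hpc.1 E (hS hE)), Finset.sum_const,
    smul_eq_mul, mul_comm]

include hpc in
lemma disjoint_of_distfar {E F : Finset V} (hE : E ∈ H.edges) (hF : F ∈ H.edges)
    (hd : ((d : ℕ∞) + 1) ≤ edgeDist H E F) : Disjoint E F := by
  by_contra hc
  rw [Finset.not_disjoint_iff_nonempty_inter] at hc
  rw [hpc.2 E hE F hF hc] at hd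
  have h2 : ((d + 1 : ℕ) : ℕ∞) ≤ ((d - (E ∩ F).card : ℕ) : ℕ∞) := by
    rw [Nat.cast_add, Nat.cast_one]; exact hd
  have := Nat.cast_le (α := ℕ∞) |>.mp h2
  omega

end AuxTaylor

section AuxRank
variable {V : Type*} [DecidableEq V] [LinearOrder V] {H : SimpleHypergraph V} {d : ℕ}

/-- The finset of `i`-element sets of pairwise `(d+1)`-disjoint edges. -/
def rhsSet (H : SimpleHypergraph V) (d i : ℕ) : Finset (Finset (Finset V)) :=
  H.edges.powerset.filter fun S => S.card = i ∧
    ∀ E ∈ S, ∀ F ∈ S, E ≠ F → ((d : ℕ∞) + 1) ≤ edgeDist H E F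

/-- Its image in the monomial world. -/
def afinSet (H : SimpleHypergraph V) (d i : ℕ) : Finset (Finset (V →₀ ℕ)) :=
  (rhsSet H d i).image fun S => S.image mexp

lemma card_afin (i : ℕ) : (afinSet H d i).card = (rhsSet H d i).card :=
  Finset.card_image_of_injective _ (Finset.image_injective mexp_injective)

variable (hpc : UniformPC H d)

include hpc in
lemma mem_rhs_pdisjoint {S : Finset (Finset V)} (hS : S ∈ rhsSet H d i) :
    ∀ E ∈ S, ∀ F ∈ S, E ≠ F → Disjoint E F := by
  rw [rhsSet, Finset.mem_filter, Finset.mem_powerset] at hS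
  obtain ⟨hsub, -, hfar⟩ := hS
  intro E hE F hF hEF
  exact disjoint_of_distfar hpc (hsub hE) (hsub hF) (hfar E hE F hF hEF)

include hpc in
lemma afin_subset_taylor (i : ℕ) :
    afinSet H d i ⊆ TaylorIndex (H.edges.image mexp) i (d * i) := by
  intro 𝒮 h𝒮
  obtain ⟨S, hS, rfl⟩ := Finset.mem_image.mp h𝒮
  have hdisj := mem_rhs_pdisjoint hpc hS
  rw [rhsSet, Finset.mem_filter, Finset.mem_powerset] at hS
  obtain ⟨hsub, hcard, -⟩ := hS
  refine mem_taylor_iff.mpr ⟨S, hsub, hcard, ?_, rfl⟩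
  rw [supcard_of_pdisjoint hpc hsub hdisj, hcard]

include hpc in
lemma taylor_pdisjoint {i : ℕ} {𝒮 : Finset (V →₀ ℕ)}
    (h : 𝒮 ∈ TaylorIndex (H.edges.image mexp) i (d * i)) :
    ∃ S : Finset (Finset V), S ⊆ H.edges ∧ S.card = i ∧ 𝒮 = S.image mexp ∧
      (∀ E ∈ S, ∀ F ∈ S, E ≠ F → Disjoint E F) ∧ (S.sup id).card = d * i := by
  obtain ⟨S, hsub, hcard, hsup, rfl⟩ := mem_taylor_iff.mp h
  exact ⟨S, hsub, hcard, rfl, pdisjoint_of_supcard hpc hsub (by rw [hsup, hcard]),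
    hsup⟩

variable (k : Type*) [Field k]

include hpc in
lemma column_vanish (hd2 : 2 ≤ d) (i : ℕ)
    (S : ↥(TaylorIndex (H.edges.image mexp) (i+1) (d*i)))
    (r : ↥(TaylorIndex (H.edges.image mexp) i (d*i)))
    (hr : ↑r ∈ afinSet H d i) :
    taylorMatrix k (H.edges.image mexp) i (d*i) r S = 0 := by
  rw [taylorMatrix]
  rw [if_neg]
  rintro ⟨hsub, hsup⟩
  obtain ⟨S₀, hS₀rhs, hS₀eq⟩ := Finset.mem_image.mp hr
  have hS₀disj := mem_rhs_pdisjoint hpc hS₀rhs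
  have hS₀far := (Finset.mem_filter.mp hS₀rhs).2.2
  have hS₀sub : S₀ ⊆ H.edges := Finset.mem_powerset.mp (Finset.mem_filter.mp hS₀rhs).1
  have hS₀card : S₀.card = i := (Finset.mem_filter.mp hS₀rhs).2.1
  -- the extra monomial
  have hrcard : (r : Finset (V →₀ ℕ)).card = i :=
    (Finset.mem_filter.mp r.2).2.1
  have hScard : (S : Finset (V →₀ ℕ)).card = i + 1 :=
    (Finset.mem_filter.mp S.2).2.1
  have hsd : ((S : Finset (V →₀ ℕ)) \ (r : Finset (V →₀ ℕ))).card = 1 := by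
    rw [Finset.card_sdiff_of_subset hsub]; omega
  obtain ⟨g, hg⟩ := Finset.card_eq_one.mp hsd
  have hgS : g ∈ (S : Finset (V →₀ ℕ)) := by
    have : g ∈ (S : Finset (V →₀ ℕ)) \ (r : Finset (V →₀ ℕ)) := hg ▸ Finset.mem_singleton_self g
    exact (Finset.mem_sdiff.mp this).1
  have hgr : g ∉ (r : Finset (V →₀ ℕ)) := by
    have : g ∈ (S : Finset (V →₀ ℕ)) \ (r : Finset (V →₀ ℕ)) := hg ▸ Finset.mem_singleton_self g
    exact (Finset.mem_sdiff.mp this).2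
  have hSG : (S : Finset (V →₀ ℕ)) ⊆ H.edges.image mexp :=
    Finset.mem_powerset.mp (Finset.mem_filter.mp S.2).1
  obtain ⟨K, hKedge, hKg⟩ := Finset.mem_image.mp (hSG hgS)
  have hKnot : K ∉ S₀ := by
    intro hc
    apply hgr
    rw [← hS₀eq, ← hKg]
    exact Finset.mem_image_of_mem mexp hc
  have hKsub : K ⊆ S₀.sup id := by
    rw [← mexp_le_iff (B := S₀.sup id)]
    rw [mexp_finset_sup]
    rw [hS₀eq]
    rw [hsup]
    rw [hKg]
    exact Finset.le_sup (f := id) hgS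
  obtain ⟨F, hFS, F', hF'S, hFF', hnear⟩ :=
    lemL hpc hd2 S₀ (fun F hF => hS₀sub hF) hS₀disj K hKedge hKnot hKsub
  exact hnear (hS₀far F hFS F' hF'S hFF')

include hpc in
lemma pivot_column (hd2 : 2 ≤ d) (i : ℕ)
    (r : ↥(TaylorIndex (H.edges.image mexp) i (d*i)))
    (hr : ↑r ∉ afinSet H d i) :
    ∃ S : ↥(TaylorIndex (H.edges.image mexp) (i+1) (d*i)),
      taylorMatrix k (H.edges.image mexp) i (d*i) r S ≠ 0 ∧
      ∀ r' : ↥(TaylorIndex (H.edges.image mexp) i (d*i)), r' ≠ r →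
        taylorMatrix k (H.edges.image mexp) i (d*i) r' S = 0 := by
  obtain ⟨T, hTsub, hTcard, hTeq, hTdisj, hTsup⟩ := taylor_pdisjoint hpc r.2
  -- T is not distance-far, get a close pair
  have hTnot : ¬ (∀ E ∈ T, ∀ F ∈ T, E ≠ F → ((d : ℕ∞) + 1) ≤ edgeDist H E F) := by
    intro hfar
    apply hr
    rw [hTeq]
    refine Finset.mem_image_of_mem _ ?_
    rw [rhsSet, Finset.mem_filter, Finset.mem_powerset]
    exact ⟨hTsub, hTcard, hfar⟩
  push_neg at hTnot
  obtain ⟨E, hET, F, hFT, hEF, hnear⟩ := hTnot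
  have hdisjEF : Disjoint E F := hTdisj E hET F hFT hEF
  obtain ⟨C, hCedge, hCE, hCF, hCsub, hCEne, hCFne⟩ :=
    exists_middle_edge hpc hd2 (hTsub hET) (hTsub hFT) hdisjEF (not_le.mpr hnear)
  have hCnotT : C ∉ T := by
    intro hc
    rcases hCEne with ⟨y, hy⟩
    rcases Finset.mem_inter.mp hy with ⟨hyC, hyE⟩
    exact Finset.disjoint_left.mp (hTdisj C hc E hET hCE) hyC hyE
  have hCle : C ⊆ T.sup id := by
    refine hCsub.trans (Finset.union_subset ?_ ?_)
    · exact (Finset.le_sup (f := id) hET : E ≤ T.sup id)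
    · exact (Finset.le_sup (f := id) hFT : F ≤ T.sup id)
  have hmCnotin : mexp C ∉ (r : Finset (V →₀ ℕ)) := by
    rw [hTeq]
    intro hc
    obtain ⟨C', hC', hCC'⟩ := Finset.mem_image.mp hc
    exact hCnotT (mexp_injective hCC' ▸ hC')
  -- the new column index
  have hScol : insert (mexp C) (r : Finset (V →₀ ℕ)) ∈
      TaylorIndex (H.edges.image mexp) (i+1) (d*i) := by
    refine mem_taylor_iff.mpr ⟨insert C T, ?_, ?_, ?_, ?_⟩
    · intro X hX
      rcases Finset.mem_insert.mp hX with rfl | hX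
      · exact hCedge
      · exact hTsub hX
    · rw [Finset.card_insert_of_notMem hCnotT, hTcard]
    · rw [Finset.sup_insert]
      have : (id C : Finset V) ⊔ T.sup id = T.sup id := sup_eq_right.mpr hCle
      rw [this, hTsup]
    · rw [Finset.image_insert, hTeq]
  refine ⟨⟨_, hScol⟩, ?_, ?_⟩
  · rw [taylorMatrix]
    have hsup : (r : Finset (V →₀ ℕ)).sup id =
        (insert (mexp C) (r : Finset (V →₀ ℕ))).sup id := by
      rw [Finset.sup_insert]
      have hle : (id (mexp C) : V →₀ ℕ) ≤ (r : Finset (V →₀ ℕ)).sup id := by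
        rw [hTeq, ← mexp_finset_sup, id]
        exact mexp_le_iff.mpr hCle
      exact (sup_eq_right.mpr hle).symm
    rw [if_pos ⟨Finset.subset_insert _ _, hsup.symm ▸ rfl⟩]
    have hsd : insert (mexp C) (r : Finset (V →₀ ℕ)) \ (r : Finset (V →₀ ℕ)) =
        {mexp C} := by
      ext x
      simp only [Finset.mem_sdiff, Finset.mem_insert, Finset.mem_singleton]
      constructor
      · rintro ⟨h1 | h1, h2⟩
        · exact h1
        · exact absurd h1 h2
      · rintro rfl
        exact ⟨Or.inl rfl, hmCnotin⟩
    rw [hsd, Finset.sum_singleton]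
    exact pow_ne_zero _ (neg_ne_zero.mpr one_ne_zero)
  · intro r' hr'
    rw [taylorMatrix]
    rw [if_neg]
    rintro ⟨hsub0, hsup0⟩
    have hsub' : (r' : Finset (V →₀ ℕ)) ⊆ insert (mexp C) (r : Finset (V →₀ ℕ)) := hsub0
    have hsup' : (r' : Finset (V →₀ ℕ)).sup id =
        (insert (mexp C) (r : Finset (V →₀ ℕ))).sup id := hsup0
    -- r' = (insert (mexp C) r).erase g for some g
    have hr'card : (r' : Finset (V →₀ ℕ)).card = i := (Finset.mem_filter.mp r'.2).2.1
    have hScard : (insert (mexp C) (r : Finset (V →₀ ℕ))).card = i + 1 := by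
      rw [Finset.card_insert_of_notMem hmCnotin, (Finset.mem_filter.mp r.2).2.1]
    have hsd1 : ((insert (mexp C) (r : Finset (V →₀ ℕ))) \ (r' : Finset (V →₀ ℕ))).card
        = 1 := by
      rw [Finset.card_sdiff_of_subset hsub']; omega
    obtain ⟨g, hg⟩ := Finset.card_eq_one.mp hsd1
    have hgmem : g ∈ insert (mexp C) (r : Finset (V →₀ ℕ)) ∧
        g ∉ (r' : Finset (V →₀ ℕ)) := by
      have : g ∈ _ \ _ := hg ▸ Finset.mem_singleton_self g
      exact Finset.mem_sdiff.mp this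
    have hr'eq : (r' : Finset (V →₀ ℕ)) = (insert (mexp C) (r : Finset (V →₀ ℕ))).erase g := by
      apply Finset.eq_of_subset_of_card_le
      · intro x hx
        refine Finset.mem_erase.mpr ⟨?_, hsub' hx⟩
        rintro rfl
        exact hgmem.2 hx
      · rw [Finset.card_erase_of_mem hgmem.1]
        omega
    -- underlying edge family of r'
    obtain ⟨T', hT'sub, hT'card, hT'eq, hT'disj, -⟩ := taylor_pdisjoint hpc r'.2
    by_cases hgC : g = mexp C
    · -- then r' = r, contradiction
      apply hr'
      apply Subtype.ext
      rw [hr'eq, hgC]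
      rw [Finset.erase_insert hmCnotin]
    · -- g = mexp Fg for Fg ∈ T; C and one of E,F are both in T'
      have hgr : g ∈ (r : Finset (V →₀ ℕ)) := by
        rcases Finset.mem_insert.mp hgmem.1 with h | h
        · exact absurd h hgC
        · exact h
      have hmCr' : mexp C ∈ (r' : Finset (V →₀ ℕ)) := by
        rw [hr'eq]
        exact Finset.mem_erase.mpr ⟨fun h => hgC h.symm, Finset.mem_insert_self _ _⟩
      have hCT' : C ∈ T' := by
        rw [hT'eq] at hmCr'
        obtain ⟨C', hC', hCC'⟩ := Finset.mem_image.mp hmCr'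
        exact mexp_injective hCC' ▸ hC'
      -- one of E, F differs from the erased edge
      have key : ∀ X : Finset V, X ∈ T → mexp X ≠ g → (C ∩ X).Nonempty → False := by
        intro X hXT hXg hCX
        have hmX : mexp X ∈ (r' : Finset (V →₀ ℕ)) := by
          rw [hr'eq]
          refine Finset.mem_erase.mpr ⟨hXg, ?_⟩
          refine Finset.mem_insert_of_mem ?_
          rw [hTeq]
          exact Finset.mem_image_of_mem mexp hXT
        have hXT' : X ∈ T' := by
          rw [hT'eq] at hmX
          obtain ⟨X', hX', hXX'⟩ := Finset.mem_image.mp hmX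
          exact mexp_injective hXX' ▸ hX'
        have hCXne : C ≠ X := by
          rintro rfl
          exact hCnotT hXT
        rcases hCX with ⟨y, hy⟩
        rcases Finset.mem_inter.mp hy with ⟨hyC, hyX⟩
        exact Finset.disjoint_left.mp (hT'disj C hCT' X hXT' hCXne) hyC hyX
      by_cases hEg : mexp E = g
      · -- then mexp F ≠ g since E ≠ F
        have hFg : mexp F ≠ g := by
          rw [← hEg]
          intro h
          exact hEF (mexp_injective h).symm
        exact key F hFT hFg hCFne
      · exact key E hET hEg hCEne

end AuxRank

section AuxRank2
open Matrix
variable {V : Type*} [DecidableEq V] [LinearOrder V] {H : SimpleHypergraph V} {d : ℕ}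
variable (hpc : UniformPC H d) (k : Type*) [Field k]

include hpc in
lemma range_taylor_eq (hd2 : 2 ≤ d) (i : ℕ) :
    LinearMap.range (taylorBoundary k (H.edges.image mexp) i (d*i)) =
    Submodule.span k ((fun r : ↥(TaylorIndex (H.edges.image mexp) i (d*i)) =>
      Pi.single r (1:k)) '' {r | ↑r ∉ afinSet H d i}) := by
  rw [taylorBoundary, Matrix.range_mulVecLin]
  apply le_antisymm
  · rw [Submodule.span_le]
    rintro v ⟨S, rfl⟩
    have hexp : (taylorMatrix k (H.edges.image mexp) i (d*i))ᵀ S =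
        ∑ r ∈ Finset.univ, taylorMatrix k (H.edges.image mexp) i (d*i) r S •
          (Pi.single r (1:k) : ↥(TaylorIndex (H.edges.image mexp) i (d*i)) → k) := by
      funext r'
      rw [Finset.sum_apply]
      simp only [Pi.smul_apply, Pi.single_apply, smul_eq_mul, mul_ite, mul_one, mul_zero]
      rw [Finset.sum_ite_eq]
      simp [Matrix.transpose_apply]
    rw [show (taylorMatrix k (H.edges.image mexp) i (d*i)).col S = _ from hexp]
    apply Submodule.sum_mem
    intro r _
    by_cases hr : ↑r ∈ afinSet H d i
    · rw [column_vanish hpc k hd2 i S r hr, zero_smul]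
      exact Submodule.zero_mem _
    · exact Submodule.smul_mem _ _ (Submodule.subset_span ⟨r, hr, rfl⟩)
  · rw [Submodule.span_le]
    rintro v ⟨r, hr, rfl⟩
    beta_reduce
    obtain ⟨S, hS0, hSz⟩ := pivot_column hpc k hd2 i r hr
    have hcol : (taylorMatrix k (H.edges.image mexp) i (d*i))ᵀ S ∈
        Submodule.span k (Set.range (taylorMatrix k (H.edges.image mexp) i (d*i))ᵀ) :=
      Submodule.subset_span ⟨S, rfl⟩
    have heq : Pi.single r (1:k) =
        (taylorMatrix k (H.edges.image mexp) i (d*i) r S)⁻¹ •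
          (taylorMatrix k (H.edges.image mexp) i (d*i))ᵀ S := by
      funext r'
      by_cases h : r' = r
      · subst h
        simp only [Pi.single_apply, if_pos rfl, Pi.smul_apply, Matrix.transpose_apply,
          smul_eq_mul]
        exact (inv_mul_cancel₀ hS0).symm
      · simp only [Pi.single_apply, if_neg h, Pi.smul_apply, Matrix.transpose_apply,
          smul_eq_mul, hSz r' h, mul_zero]
    rw [heq]
    exact Submodule.smul_mem _ _ hcol

include hpc in
lemma finrank_range_taylor (hd2 : 2 ≤ d) (i : ℕ) :
    Module.finrank k (LinearMap.range (taylorBoundary k (H.edges.image mexp) i (d*i)))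
      = (TaylorIndex (H.edges.image mexp) i (d*i)).card - (afinSet H d i).card := by
  rw [range_taylor_eq hpc k hd2 i]
  have hli : LinearIndependent k
      (fun r : {r : ↥(TaylorIndex (H.edges.image mexp) i (d*i)) // ↑r ∉ afinSet H d i} =>
        (Pi.single (r : ↥(TaylorIndex (H.edges.image mexp) i (d*i))) (1:k) :
          ↥(TaylorIndex (H.edges.image mexp) i (d*i)) → k)) := by
    have hb := (Pi.basisFun k ↥(TaylorIndex (H.edges.image mexp) i (d*i))).linearIndependent
    have heq : (fun r : {r : ↥(TaylorIndex (H.edges.image mexp) i (d*i)) //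
        ↑r ∉ afinSet H d i} =>
          (Pi.single (r : ↥(TaylorIndex (H.edges.image mexp) i (d*i))) (1:k) :
            ↥(TaylorIndex (H.edges.image mexp) i (d*i)) → k)) =
        ⇑(Pi.basisFun k ↥(TaylorIndex (H.edges.image mexp) i (d*i))) ∘ Subtype.val := by
      funext r
      simp [Pi.basisFun_apply]
    rw [heq]
    exact hb.comp Subtype.val Subtype.val_injective
  have himg : ((fun r : ↥(TaylorIndex (H.edges.image mexp) i (d*i)) =>
      (Pi.single r (1:k) : ↥(TaylorIndex (H.edges.image mexp) i (d*i)) → k)) ''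
        {r | ↑r ∉ afinSet H d i}) =
      Set.range (fun r : {r : ↥(TaylorIndex (H.edges.image mexp) i (d*i)) //
        ↑r ∉ afinSet H d i} =>
          (Pi.single (r : ↥(TaylorIndex (H.edges.image mexp) i (d*i))) (1:k) :
            ↥(TaylorIndex (H.edges.image mexp) i (d*i)) → k)) := by
    rw [Set.image_eq_range]
    rfl
  rw [himg, finrank_span_eq_card hli]
  rw [Fintype.card_subtype]
  have hpart := Finset.card_filter_add_card_filter_not (s := Finset.univ)
    (p := fun r : ↥(TaylorIndex (H.edges.image mexp) i (d*i)) => ↑r ∈ afinSet H d i)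
  have hfp : (Finset.univ.filter
      (fun r : ↥(TaylorIndex (H.edges.image mexp) i (d*i)) => ↑r ∈ afinSet H d i)).card
      = (afinSet H d i).card := by
    apply Finset.card_bij (fun r _ => ((r : ↥(TaylorIndex (H.edges.image mexp) i (d*i))) :
      Finset (V →₀ ℕ)))
    · intro a ha
      exact (Finset.mem_filter.mp ha).2
    · intro a _ b _ hab
      exact Subtype.ext hab
    · intro b hb
      exact ⟨⟨b, afin_subset_taylor hpc i hb⟩,
        Finset.mem_filter.mpr ⟨Finset.mem_univ _, hb⟩, rfl⟩
  have hcu : (Finset.univ : Finset ↥(TaylorIndex (H.edges.image mexp) i (d*i))).card =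
      (TaylorIndex (H.edges.image mexp) i (d*i)).card := by
    rw [Finset.card_univ, Fintype.card_coe]
  omega

include hpc in
lemma taylor_low_empty (i : ℕ) (hd1 : 1 ≤ d) (hi : 1 ≤ i) :
    TaylorIndex (H.edges.image mexp) (i-1) (d*i) = ∅ := by
  rw [Finset.eq_empty_iff_forall_notMem]
  intro 𝒮 h𝒮
  obtain ⟨S, hsub, hcard, hsup, rfl⟩ := mem_taylor_iff.mp h𝒮
  have h1 : (S.sup id).card ≤ ∑ E ∈ S, E.card := card_sup_le_sum S
  have h2 : ∑ E ∈ S, E.card = d * (i-1) := by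
    rw [Finset.sum_congr rfl (fun E hE => hpc.1 E (hsub hE)), Finset.sum_const,
      smul_eq_mul, hcard, mul_comm]
  have h3 : d * (i-1) < d * i :=
    mul_lt_mul_of_pos_left (by omega) (by omega)
  omega

lemma finrank_ker_taylor_of_empty (n j : ℕ)
    (h : TaylorIndex (H.edges.image mexp) n j = ∅) :
    Module.finrank k (LinearMap.ker (taylorBoundary k (H.edges.image mexp) n j))
      = (TaylorIndex (H.edges.image mexp) (n+1) j).card := by
  have hIs : IsEmpty ↥(TaylorIndex (H.edges.image mexp) n j) := by
    rw [h]
    exact Finset.isEmpty_coe_sort.mpr rfl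
  have h0 : taylorBoundary k (H.edges.image mexp) n j = 0 := by
    apply LinearMap.ext
    intro v
    funext x
    exact hIs.elim x
  rw [h0, LinearMap.ker_zero, finrank_top, Module.finrank_pi, Fintype.card_coe]

end AuxRank2

section AuxFinal
variable {V : Type*} [DecidableEq V] [LinearOrder V] {H : SimpleHypergraph V} {d : ℕ}
variable (hpc : UniformPC H d) (k : Type*) [Field k]

include hpc in
lemma betti_formula (hd2 : 2 ≤ d) (i : ℕ) (hi : 1 ≤ i) :
    monomialBetti k (H.edges.image mexp) (i-1) (d*i) = (rhsSet H d i).card := by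
  obtain ⟨n, rfl⟩ : ∃ n, i = n + 1 := ⟨i - 1, by omega⟩
  rw [monomialBetti]
  rw [finrank_ker_taylor_of_empty k ((n+1)-1) (d*(n+1))
    (taylor_low_empty hpc (n+1) (by omega) hi)]
  simp only [Nat.succ_sub_one]
  rw [finrank_range_taylor hpc k hd2 (n+1)]
  have hle : (afinSet H d (n+1)).card ≤
      (TaylorIndex (H.edges.image mexp) (n+1) (d*(n+1))).card :=
    Finset.card_le_card (afin_subset_taylor hpc (n+1))
  have hca := card_afin (H := H) (d := d) (n+1)
  omega

end AuxFinal

theorem betti_disjoint_count_and_reg_lower_bound (k : Type*) [Field k] {V : Type*}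
    [LinearOrder V] (H : SimpleHypergraph V) (d c : ℕ) (hpc : UniformPC H d)
    (hne : H.edges.Nonempty)
    (S₀ : Finset (Finset V)) (hS₀ : S₀ ⊆ H.edges) (hS₀c : S₀.card = c)
    (hS₀d : ∀ E ∈ S₀, ∀ F ∈ S₀, E ≠ F → ((d : ℕ∞) + 1) ≤ edgeDist H E F)
    (hmax : ∀ S ⊆ H.edges,
      (∀ E ∈ S, ∀ F ∈ S, E ≠ F → ((d : ℕ∞) + 1) ≤ edgeDist H E F) → S.card ≤ c) :
    (∀ i : ℕ, 1 ≤ i → edgeBetti k H (i - 1) (d * i) =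
      (H.edges.powerset.filter fun S => S.card = i ∧
        ∀ E ∈ S, ∀ F ∈ S, E ≠ F → ((d : ℕ∞) + 1) ≤ edgeDist H E F).card) ∧
    (d - 1) * c + 1 ≤ edgeReg k H := by
  obtain ⟨E₀, hE₀⟩ := hne
  have hd2 : 2 ≤ d := by
    have h1 := H.card_ge E₀ hE₀
    rw [hpc.1 E₀ hE₀] at h1
    exact h1
  have part1 : ∀ i : ℕ, 1 ≤ i → edgeBetti k H (i - 1) (d * i) =
      (H.edges.powerset.filter fun S => S.card = i ∧
        ∀ E ∈ S, ∀ F ∈ S, E ≠ F → ((d : ℕ∞) + 1) ≤ edgeDist H E F).card := by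
    intro i hi
    rw [edgeBetti, betti_formula hpc k hd2 i hi]
    apply congrArg Finset.card
    unfold rhsSet
    exact (Finset.filter_congr_decidable _ _ _).trans
      (Finset.filter_congr_decidable _ _ _).symm
  refine ⟨part1, ?_⟩
  have hc1 : 1 ≤ c := by
    have hsing := hmax {E₀} (by simpa using hE₀) ?_
    · simpa using hsing
    · intro E hE F hF hEF
      rw [Finset.mem_singleton] at hE hF
      exact absurd (hE.trans hF.symm) hEF
  have hmem : S₀ ∈ rhsSet H d c := by
    rw [rhsSet, Finset.mem_filter, Finset.mem_powerset]
    exact ⟨hS₀, hS₀c, hS₀d⟩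
  have hpos : 0 < (rhsSet H d c).card := Finset.card_pos.mpr ⟨S₀, hmem⟩
  have hβ : monomialBetti k (H.edges.image mexp) (c-1) (d*c) ≠ 0 := by
    rw [betti_formula hpc k hd2 c hc1]
    omega
  rw [edgeReg, monReg]
  apply le_csSup
  · refine ⟨mdeg ((H.edges.image mexp).sup id), ?_⟩
    rintro r ⟨i, j, hij, hrij⟩
    have hker : Module.finrank k
        (LinearMap.ker (taylorBoundary k (H.edges.image mexp) i j)) ≠ 0 := by
      intro h0
      apply hij
      rw [monomialBetti]
      omega
    have hTne : (TaylorIndex (H.edges.image mexp) (i+1) j).Nonempty := by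
      by_contra hc
      rw [Finset.not_nonempty_iff_eq_empty] at hc
      apply hker
      have hle := Submodule.finrank_le
        (LinearMap.ker (taylorBoundary k (H.edges.image mexp) i j))
      rw [Module.finrank_pi, Fintype.card_coe] at hle
      have hz : (TaylorIndex (H.edges.image mexp) (i+1) j).card = 0 := by
        rw [hc]
        rfl
      omega
    obtain ⟨𝒮, h𝒮⟩ := hTne
    rw [TaylorIndex, Finset.mem_filter, Finset.mem_powerset] at h𝒮
    have hsup : 𝒮.sup id ≤ (H.edges.image mexp).sup id := Finset.sup_mono h𝒮.1
    have hj : j ≤ mdeg ((H.edges.image mexp).sup id) := h𝒮.2.2 ▸ mdeg_mono hsup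
    omega
  · refine ⟨c - 1, d * c, hβ, ?_⟩
    have h1 : (d-1)*c + c = d*c := by
      have hd1 : (d-1) + 1 = d := by omega
      calc (d-1)*c + c = ((d-1)+1)*c := by rw [add_mul, one_mul]
        _ = d*c := by rw [hd1]
    omega
end
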